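/- Let g be strictly concave on [0,∞) with g(0)=0 and g positive on (0,∞), and d(x,y)=g(|x-y|). For four distinct reals x₁, y₁, x₂, y₂, if d(x₁,y₁) + d(x₂,y₂) ≤ d(x₁,y₂) + d(x₂,y₁), then the closed intervals [min x₁ y₁, max x₁ y₁] and [min x₂ y₂, max x₂ y₂] are either disjoint or one contains the other. -/

import Mathlib

/-!
A strictly concave `g` that is bounded below on `(0, ∞)` is strictly increasing on `[0, ∞)`.
If the two intervals crossed, say `a < b < c < e` with pairs `{a, c}` and `{b, e}`, the cross
matching would cost either `g (e - a) + g (c - b)`, which strict concavity puts below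
`g (c - a) + g (e - b)` (same sum of arguments, more spread out), or `g (b - a) + g (e - c)`,
which monotonicity puts below it termwise; either way the hypothesis fails.
-/

open Set

lemma StrictConcaveOn.add_lt_add_of_sum_eq {s : Set ℝ} {f : ℝ → ℝ} (hf : StrictConcaveOn ℝ s f)
    {a b c e : ℝ} (ha : a ∈ s) (he : e ∈ s) (hab : a < b) (hbe : b < e) (hsum : a + e = b + c) :
    f a + f e < f b + f c := by
  obtain rfl : c = a + e - b := by linarith
  have hb := hf.neg.secant_strict_mono_aux1 ha he hab hbe
  have hc := hf.neg.secant_strict_mono_aux1 ha he (y := a + e - b) (by linarith) (by linarith)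
  simp only [Pi.neg_apply] at hb hc
  have key : (e - a) * (f a + f e) < (e - a) * (f b + f (a + e - b)) := by
    linear_combination hb + hc
  exact lt_of_mul_lt_mul_left key (by linarith)

lemma StrictConcaveOn.strictMonoOn_of_bddBelow {f : ℝ → ℝ} {a : ℝ}
    (hf : StrictConcaveOn ℝ (Ici a) f) (hb : BddBelow (f '' Ioi a)) : StrictMonoOn f (Ici a) := by
  intro x hx y hy hxy
  by_contra! hyx
  obtain ⟨b, hb⟩ := hb
  rw [mem_Ici] at hx hy
  have hy₁ : y + 1 ∈ Ici a := by rw [mem_Ici]; linarith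
  -- the secant from `x` to `y + 1` has negative slope and `f` stays below its extension,
  -- so `f` eventually drops below the lower bound `b`
  set m := (f (y + 1) - f x) / (y + 1 - x) with hm_def
  have hm : m < 0 := calc
    m < (f y - f x) / (y - x) :=
      hf.secant_strict_mono hx hy hy₁ hxy.ne' (by linarith) (by linarith)
    _ ≤ 0 := div_nonpos_of_nonpos_of_nonneg (by linarith) (by linarith)
  have hfy : b ≤ f (y + 1) := hb ⟨y + 1, by rw [mem_Ioi]; linarith, rfl⟩
  obtain ⟨t, hyt, hmt⟩ : ∃ t, y + 1 < t ∧ m * (t - (y + 1)) = b - f (y + 1) - 1 :=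
    ⟨y + 1 + (f (y + 1) - b + 1) / -m,
      by linarith [div_pos (by linarith : 0 < f (y + 1) - b + 1) (neg_pos.2 hm)],
      by field_simp [hm.ne]; ring⟩
  have hslope : (f t - f x) / (t - x) < m :=
    hf.secant_strict_mono hx hy₁ (by rw [mem_Ici]; linarith) (by linarith) (by linarith) hyt
  rw [div_lt_iff₀ (by linarith)] at hslope
  have hm' : f (y + 1) - f x = m * (y + 1 - x) := by rw [hm_def, div_mul_cancel₀ _ (by linarith)]
  have hft : b ≤ f t := hb ⟨t, by rw [mem_Ioi]; linarith, rfl⟩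
  linarith

def DisjointOrNested {α : Type*} (I J : Set α) : Prop := Disjoint I J ∨ I ⊆ J ∨ J ⊆ I

lemma DisjointOrNested.symm {α : Type*} {I J : Set α} (h : DisjointOrNested I J) :
    DisjointOrNested J I := by
  rcases h with h | h | h
  exacts [Or.inl h.symm, Or.inr (Or.inr h), Or.inr (Or.inl h)]

section

variable {g : ℝ → ℝ} (hg : StrictConcaveOn ℝ (Ici 0) g) (hmono : StrictMonoOn g (Ici 0))
include hg hmono

lemma disjointOrNested_uIcc_of_cost_le_of_lt {x₁ y₁ x₂ y₂ : ℝ} (h₁ : x₁ < y₁) (h₂ : x₁ < x₂)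
    (h₃ : x₁ < y₂) (h₄ : y₁ ≠ x₂) (h₅ : y₁ ≠ y₂)
    (hle : g |x₁ - y₁| + g |x₂ - y₂| ≤ g |x₁ - y₂| + g |x₂ - y₁|) :
    DisjointOrNested (uIcc x₁ y₁) (uIcc x₂ y₂) := by
  have habs : ∀ {u v : ℝ}, u < v → |u - v| = v - u := fun h => by
    rw [abs_sub_comm, abs_of_pos (sub_pos.2 h)]
  rw [uIcc_of_lt h₁]
  rcases h₄.lt_or_gt with h₄ | h₄ <;> rcases h₅.lt_or_gt with h₅ | h₅
  · exact Or.inl (disjoint_left.2 fun z hz hz' => (lt_min h₄ h₅).not_ge (hz'.1.trans hz.2))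
  · rw [habs h₁, abs_of_pos (sub_pos.2 (h₅.trans h₄)), habs h₃,
      abs_of_pos (sub_pos.2 h₄)] at hle
    have hleft := hmono (by rw [mem_Ici]; linarith) (by rw [mem_Ici]; linarith)
      (by linarith : y₂ - x₁ < y₁ - x₁)
    have hright := hmono (by rw [mem_Ici]; linarith) (by rw [mem_Ici]; linarith)
      (by linarith : x₂ - y₁ < x₂ - y₂)
    linarith
  · rw [habs h₁, habs (h₄.trans h₅), habs h₃, habs h₄] at hle
    have hspread := hg.add_lt_add_of_sum_eq
      (a := y₁ - x₂) (b := y₁ - x₁) (c := y₂ - x₂) (e := y₂ - x₁)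
      (by rw [mem_Ici]; linarith) (by rw [mem_Ici]; linarith) (by linarith) (by linarith) (by ring)
    linarith
  · exact Or.inr (Or.inr (uIcc_subset_Icc ⟨h₂.le, h₄.le⟩ ⟨h₃.le, h₅.le⟩))

lemma disjointOrNested_uIcc_of_cost_le {x₁ y₁ x₂ y₂ : ℝ}
    (hdist : x₁ ≠ y₁ ∧ x₁ ≠ x₂ ∧ x₁ ≠ y₂ ∧ y₁ ≠ x₂ ∧ y₁ ≠ y₂ ∧ x₂ ≠ y₂)
    (hle : g |x₁ - y₁| + g |x₂ - y₂| ≤ g |x₁ - y₂| + g |x₂ - y₁|) :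
    DisjointOrNested (uIcc x₁ y₁) (uIcc x₂ y₂) := by
  obtain ⟨h₁₁, h₁₂, h₁₃, h₁₄, h₁₅, h₂₂⟩ := hdist
  wlog hmin : min x₁ y₁ < min x₂ y₂ generalizing x₁ y₁ x₂ y₂
  · have hne : min x₁ y₁ ≠ min x₂ y₂ := by
      rcases min_choice x₁ y₁ with h | h <;> rcases min_choice x₂ y₂ with h' | h' <;>
        rw [h, h'] <;> assumption
    exact (this (by linarith) h₂₂ h₁₂.symm h₁₄.symm h₁₃.symm h₁₅.symm h₁₁
      (lt_of_le_of_ne (not_lt.1 hmin) hne.symm)).symm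
  wlog h₁ : x₁ < y₁ generalizing x₁ y₁ x₂ y₂
  · rw [uIcc_comm x₁, uIcc_comm x₂]
    refine this ?_ h₁₁.symm h₁₅ h₁₄ h₁₃ h₁₂ h₂₂.symm (by rwa [min_comm, min_comm y₂])
      (lt_of_le_of_ne (not_lt.1 h₁) h₁₁.symm)
    rwa [abs_sub_comm y₁, abs_sub_comm y₂, abs_sub_comm y₁, abs_sub_comm y₂,
      add_comm (g |x₂ - y₁|)]
  rw [min_eq_left h₁.le, lt_min_iff] at hmin
  exact disjointOrNested_uIcc_of_cost_le_of_lt hg hmono h₁ hmin.1 hmin.2 h₁₄ h₁₅ hle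

end

theorem stmt_6_general (g : ℝ → ℝ)
    (hconc : ∀ x : ℝ, 0 ≤ x → ∀ y : ℝ, 0 ≤ y → x ≠ y → ∀ l : ℝ, 0 < l → l < 1 →
      l * g x + (1 - l) * g y < g (l * x + (1 - l) * y))
    (hpos : ∀ x : ℝ, 0 < x → 0 < g x)
    (d : ℝ → ℝ → ℝ) (hd : ∀ x y : ℝ, d x y = g |x - y|)
    (x₁ y₁ x₂ y₂ : ℝ)
    (hdist : x₁ ≠ y₁ ∧ x₁ ≠ x₂ ∧ x₁ ≠ y₂ ∧ y₁ ≠ x₂ ∧ y₁ ≠ y₂ ∧ x₂ ≠ y₂)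
    (hle : d x₁ y₁ + d x₂ y₂ ≤ d x₁ y₂ + d x₂ y₁) :
    Disjoint (Set.Icc (min x₁ y₁) (max x₁ y₁)) (Set.Icc (min x₂ y₂) (max x₂ y₂)) ∨
    Set.Icc (min x₁ y₁) (max x₁ y₁) ⊆ Set.Icc (min x₂ y₂) (max x₂ y₂) ∨
    Set.Icc (min x₂ y₂) (max x₂ y₂) ⊆ Set.Icc (min x₁ y₁) (max x₁ y₁) := by
  have hg : StrictConcaveOn ℝ (Ici 0) g := by
    refine ⟨convex_Ici 0, fun x hx y hy hxy a b ha hb hab => ?_⟩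
    obtain rfl : b = 1 - a := by linarith
    exact hconc x hx y hy hxy a ha (by linarith)
  have hmono : StrictMonoOn g (Ici 0) :=
    hg.strictMonoOn_of_bddBelow ⟨0, by rintro _ ⟨x, hx, rfl⟩; exact (hpos x hx).le⟩
  simp only [hd] at hle
  exact disjointOrNested_uIcc_of_cost_le hg hmono hdist hle

/-- No-crossing lemma: with a strictly concave cost, if
`d(x₁,y₁) + d(x₂,y₂) ≤ d(x₁,y₂) + d(x₂,y₁)` then the intervals `[x₁,y₁]` and
`[x₂,y₂]` are disjoint or nested. -/
theorem stmt_6 (g : ℝ → ℝ)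
    (hconc : ∀ x : ℝ, 0 ≤ x → ∀ y : ℝ, 0 ≤ y → x ≠ y → ∀ l : ℝ, 0 < l → l < 1 →
      l * g x + (1 - l) * g y < g (l * x + (1 - l) * y))
    (h0 : g 0 = 0) (hpos : ∀ x : ℝ, 0 < x → 0 < g x)
    (d : ℝ → ℝ → ℝ) (hd : ∀ x y : ℝ, d x y = g |x - y|)
    (x₁ y₁ x₂ y₂ : ℝ)
    (hdist : x₁ ≠ y₁ ∧ x₁ ≠ x₂ ∧ x₁ ≠ y₂ ∧ y₁ ≠ x₂ ∧ y₁ ≠ y₂ ∧ x₂ ≠ y₂)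
    (hle : d x₁ y₁ + d x₂ y₂ ≤ d x₁ y₂ + d x₂ y₁) :
    Disjoint (Set.Icc (min x₁ y₁) (max x₁ y₁)) (Set.Icc (min x₂ y₂) (max x₂ y₂)) ∨
    Set.Icc (min x₁ y₁) (max x₁ y₁) ⊆ Set.Icc (min x₂ y₂) (max x₂ y₂) ∨
    Set.Icc (min x₂ y₂) (max x₂ y₂) ⊆ Set.Icc (min x₁ y₁) (max x₁ y₁) :=
  stmt_6_general g hconc hpos d hd x₁ y₁ x₂ y₂ hdist hle
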